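/- arXiv:1803.08767 — 2 statements merged into one kernel-verified Lean document; each statement's English description precedes it below -/
import Mathlib

section
/- Let c₀ > 0 and α > 0, and let (a_n)_{n ∈ ℕ} be a sequence of positive real numbers satisfying a_{n+1} ≤ exp(−c₀ a_n^{−α}) · a_n for all n ∈ ℕ. Then (a_n) converges to 0 faster than any geometric sequence: for every r ∈ (0,1), the sequence a_n / rⁿ tends to 0 as n → ∞. -/
open Filter Set

/-- **Remark 4.3 (super-geometric decay).**  Let `c₀ > 0`, `α > 0`, and let `(a_n)` be a
sequence of positive reals with `a_{n+1} ≤ exp(-c₀ a_n^{-α}) a_n` for all `n`.  Then `(a_n)`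
goes to `0` faster than any geometric sequence: for every `r ∈ (0,1)`, `a_n / rⁿ → 0`. -/
theorem supergeometric_decay
    (c₀ α : ℝ) (hc₀ : 0 < c₀) (hα : 0 < α)
    (a : ℕ → ℝ) (hpos : ∀ n, 0 < a n)
    (hrec : ∀ n, a (n + 1) ≤ Real.exp (-c₀ * (a n) ^ (-α)) * a n) :
    ∀ r ∈ Set.Ioo (0:ℝ) 1,
      Filter.Tendsto (fun n => a n / r ^ n) Filter.atTop (nhds 0) := by
  have hdec : ∀ n, a (n+1) ≤ a n := by
    intro n
    calc a (n+1) ≤ Real.exp (-c₀ * (a n) ^ (-α)) * a n := hrec n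
    _ ≤ 1 * a n := by
        apply mul_le_mul_of_nonneg_right _ (hpos n).le
        rw [Real.exp_le_one_iff]
        have := Real.rpow_pos_of_pos (hpos n) (-α)
        nlinarith
    _ = a n := one_mul _
  have hmono : ∀ n, a n ≤ a 0 := by
    intro n; induction n with
    | zero => exact le_rfl
    | succ n ih => exact (hdec n).trans ih
  set q := Real.exp (-c₀ * (a 0) ^ (-α)) with hq
  have hq0 : 0 < q := Real.exp_pos _
  have hq1 : q < 1 := by
    rw [hq, Real.exp_lt_one_iff]
    have := Real.rpow_pos_of_pos (hpos 0) (-α)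
    nlinarith
  have hstep : ∀ n, a (n+1) ≤ q * a n := by
    intro n
    refine (hrec n).trans (mul_le_mul_of_nonneg_right ?_ (hpos n).le)
    apply Real.exp_le_exp.2
    have h1 : (a 0) ^ (-α) ≤ (a n) ^ (-α) := by
      rw [Real.rpow_neg (hpos 0).le, Real.rpow_neg (hpos n).le]
      exact inv_anti₀ (Real.rpow_pos_of_pos (hpos n) α)
        (Real.rpow_le_rpow (hpos n).le (hmono n) hα.le)
    nlinarith
  have hgeom : ∀ n, a n ≤ q ^ n * a 0 := by
    intro n; induction n with
    | zero => simp
    | succ n ih =>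
      calc a (n+1) ≤ q * a n := hstep n
      _ ≤ q * (q ^ n * a 0) := by nlinarith
      _ = q ^ (n+1) * a 0 := by ring
  have ha0 : Tendsto a atTop (nhds 0) := by
    apply squeeze_zero (fun n => (hpos n).le) hgeom
    have := (tendsto_pow_atTop_nhds_zero_of_lt_one hq0.le hq1).mul_const (a 0)
    simpa using this
  -- the exponential factor tends to 0
  have hexp0 : Tendsto (fun n => Real.exp (-c₀ * (a n) ^ (-α))) atTop (nhds 0) := by
    apply Real.tendsto_exp_atBot.comp
    have h2 : Tendsto (fun n => (a n) ^ α) atTop (nhdsWithin 0 (Set.Ioi 0)) := by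
      apply tendsto_nhdsWithin_of_tendsto_nhds_of_eventually_within
      · have hc : ContinuousAt (fun x : ℝ => x ^ α) 0 :=
          Real.continuousAt_rpow_const 0 α (Or.inr hα.le)
        have := hc.tendsto.comp ha0
        simpa [Function.comp_def, Real.zero_rpow hα.ne'] using this
      · exact Filter.Eventually.of_forall fun n => Real.rpow_pos_of_pos (hpos n) α
    have h1 : Tendsto (fun n => (a n) ^ (-α)) atTop atTop := by
      have := h2.inv_tendsto_nhdsGT_zero
      apply this.congr
      intro n
      simp [Real.rpow_neg (hpos n).le]
    have : Tendsto (fun n => -c₀ * (a n) ^ (-α)) atTop atBot := by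
      exact Tendsto.const_mul_atTop_of_neg (by linarith) h1
    exact this
  intro r hr
  obtain ⟨hr0, hr1⟩ := hr
  -- eventually the factor is ≤ r/2
  have hev : ∀ᶠ n in atTop, Real.exp (-c₀ * (a n) ^ (-α)) ≤ r/2 :=
    hexp0.eventually (eventually_le_nhds (by linarith))
  obtain ⟨N, hN⟩ := eventually_atTop.1 hev
  have hstep2 : ∀ n, N ≤ n → a (n+1) ≤ (r/2) * a n := by
    intro n hn
    exact (hrec n).trans (mul_le_mul_of_nonneg_right (hN n hn) (hpos n).le)
  have hbound : ∀ m, a (N + m) ≤ (r/2) ^ m * a N := by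
    intro m; induction m with
    | zero => simp
    | succ m ih =>
      have := hstep2 (N + m) (Nat.le_add_right _ _)
      calc a (N + (m+1)) = a ((N + m) + 1) := by ring_nf
      _ ≤ (r/2) * a (N + m) := this
      _ ≤ (r/2) * ((r/2) ^ m * a N) := by nlinarith [hpos (N+m)]
      _ = (r/2) ^ (m+1) * a N := by ring
  -- squeeze
  have hrpow : ∀ n, (0:ℝ) < r ^ n := fun n => pow_pos hr0 n
  apply squeeze_zero' (Filter.Eventually.of_forall fun n => div_nonneg (hpos n).le (hrpow n).le)
    (g := fun n => (a N / r ^ N) * (1/2 : ℝ) ^ (n - N))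
  · filter_upwards [eventually_ge_atTop N] with n hn
    have hmn : n = N + (n - N) := by omega
    have hb := hbound (n - N)
    rw [← hmn] at hb
    have h3 : a n / r ^ n ≤ ((r/2) ^ (n-N) * a N) / r ^ n :=
      div_le_div_of_nonneg_right hb (hrpow n).le
    refine h3.trans (le_of_eq ?_)
    have hrn : r ^ n = r ^ N * r ^ (n - N) := by
      rw [← pow_add, Nat.add_sub_cancel' hn]
    rw [hrn, div_pow, div_pow, one_pow]
    have h4 : (0:ℝ) < r ^ (n - N) := pow_pos hr0 _
    have h5 : (0:ℝ) < r ^ N := pow_pos hr0 _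
    field_simp
  · have h1 : Tendsto (fun m : ℕ => (a N / r ^ N) * (1/2 : ℝ) ^ m) atTop (nhds 0) := by
      have := (tendsto_pow_atTop_nhds_zero_of_lt_one (by norm_num : (0:ℝ) ≤ 1/2)
        (by norm_num)).const_mul (a N / r ^ N)
      simpa using this
    exact h1.comp (tendsto_sub_atTop_nat N)
end

section
/- Let α ∈ (0,1], δ > 0, K > 0, and let f' : ℝ → ℝ be continuous with f'(0) = 0 and f' strictly increasing on [0,K]. Define g : [0,K] → ℝ by g(v) = ∫₀^∞ f'(((v^α − δατ)₊)^{1/α}) dτ (the integrand vanishes for τ ≥ v^α/(δα), so the integral is finite). Then g(0) = 0 and g is strictly increasing on [0,K]: for 0 ≤ v₁ < v₂ ≤ K one has g(v₁) < g(v₂). -/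
/-!
Along a characteristic the damped value `u(τ) = ((v^α - δατ)₊)^{1/α}` is monotone in its initial
value `v`, stays in `[0, v]`, and vanishes once `τ ≥ v^α / (δα)`. Hence for `0 ≤ v₁ < v₂ ≤ K` both
integrals live on the common interval `[0, v₂^α / (δα)]`, where `f' ∘ u` is continuous and ordered
pointwise by the monotonicity of `f'`; at `τ = 0` the order is strict, since `u(0) = v`.
-/

open Set MeasureTheory

/-- The solution of `u' = -(c/α) u^(1-α)`, `u(0) = v`, i.e. `(u^α)' = -c`, continued by `0` after
it dies out. -/
noncomputable def dampedValue (α c v τ : ℝ) : ℝ :=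
  (max (v ^ α - c * τ) 0) ^ (1 / α)

section dampedValue

variable {α c v τ : ℝ}

lemma dampedValue_eq_zero (hα : α ≠ 0) (h : v ^ α ≤ c * τ) : dampedValue α c v τ = 0 := by
  rw [dampedValue, max_eq_right (sub_nonpos.2 h), Real.zero_rpow (one_div_ne_zero hα)]

lemma dampedValue_zero_right (hα : α ≠ 0) (hv : 0 ≤ v) : dampedValue α c v 0 = v := by
  rw [dampedValue, mul_zero, sub_zero, max_eq_left (Real.rpow_nonneg hv α), one_div,
    Real.rpow_rpow_inv hv hα]

lemma continuous_dampedValue (hα : 0 ≤ α) : Continuous (dampedValue α c v) :=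
  (Real.continuous_rpow_const (one_div_nonneg.2 hα)).comp
    ((continuous_const.sub (continuous_const.mul continuous_id)).max continuous_const)

lemma dampedValue_le_dampedValue {v₁ v₂ : ℝ} (hα : 0 < α) (hv₁ : 0 ≤ v₁) (h : v₁ ≤ v₂) :
    dampedValue α c v₁ τ ≤ dampedValue α c v₂ τ := by
  unfold dampedValue
  gcongr

lemma dampedValue_mem_Icc (hα : 0 < α) (hv : 0 ≤ v) (hcτ : 0 ≤ c * τ) :
    dampedValue α c v τ ∈ Icc 0 v := by
  refine ⟨Real.rpow_nonneg (le_max_right _ _) _, ?_⟩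
  calc dampedValue α c v τ ≤ (v ^ α) ^ (1 / α) := by
        unfold dampedValue
        gcongr
        exact max_le (by linarith) (Real.rpow_nonneg hv α)
    _ = v := by rw [one_div, Real.rpow_rpow_inv hv hα.ne']

end dampedValue

lemma setIntegral_Ioi_eq_intervalIntegral {E : Type*} [NormedAddCommGroup E] [NormedSpace ℝ E]
    {f : ℝ → E} {a T : ℝ} (haT : a ≤ T) (hf : ∀ τ, T < τ → f τ = 0) :
    ∫ τ in Ioi a, f τ = ∫ τ in a..T, f τ := by
  rw [intervalIntegral.integral_of_le haT]
  refine setIntegral_eq_of_subset_of_forall_sdiff_eq_zero measurableSet_Ioi Ioc_subset_Ioi_self ?_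
  rintro τ ⟨hτa, hτT⟩
  exact hf τ (lt_of_not_ge fun h ↦ hτT ⟨hτa, h⟩)

lemma setIntegral_Ioi_comp_dampedValue {α c v T : ℝ} {f : ℝ → ℝ} (hf0 : f 0 = 0) (hα : α ≠ 0)
    (hc : 0 ≤ c) (hT : 0 ≤ T) (hvT : v ^ α ≤ c * T) :
    ∫ τ in Ioi 0, f (dampedValue α c v τ) = ∫ τ in 0..T, f (dampedValue α c v τ) :=
  setIntegral_Ioi_eq_intervalIntegral hT fun τ hτ ↦ by
    rw [dampedValue_eq_zero hα (hvT.trans (by gcongr)), hf0]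

theorem traversed_distance_strictMono_general
    (α δ K : ℝ) (hα : α ∈ Set.Ioc (0:ℝ) 1) (hδ : 0 < δ)
    (fd : ℝ → ℝ) (hfd : Continuous fd) (hfd0 : fd 0 = 0)
    (hmono : StrictMonoOn fd (Set.Icc 0 K))
    (g : ℝ → ℝ)
    (hg : ∀ v, g v = ∫ τ in Set.Ioi (0:ℝ),
        fd ((max (v ^ α - δ * α * τ) 0) ^ (1/α))) :
    g 0 = 0 ∧ StrictMonoOn g (Set.Icc 0 K) := by
  obtain ⟨hα0, -⟩ := hα
  have hc : 0 < δ * α := mul_pos hδ hα0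
  have hg' : ∀ v T, 0 ≤ T → v ^ α ≤ δ * α * T →
      g v = ∫ τ in 0..T, fd (dampedValue α (δ * α) v τ) := fun v T hT hvT ↦
    (hg v).trans (setIntegral_Ioi_comp_dampedValue hfd0 hα0.ne' hc.le hT hvT)
  refine ⟨?_, fun v₁ hv₁ v₂ hv₂ h12 ↦ ?_⟩
  · rw [hg' 0 0 le_rfl (by simp [Real.zero_rpow hα0.ne']), intervalIntegral.integral_same]
  set T := v₂ ^ α / (δ * α)
  have hT : 0 < T := div_pos (Real.rpow_pos_of_pos (hv₁.1.trans_lt h12) α) hc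
  have hv₂T : v₂ ^ α = δ * α * T := (mul_div_cancel₀ _ hc.ne').symm
  have hv₁T : v₁ ^ α ≤ δ * α * T := hv₂T ▸ Real.rpow_le_rpow hv₁.1 h12.le hα0.le
  have hmem : ∀ v ∈ Icc 0 K, ∀ τ ∈ Icc 0 T, dampedValue α (δ * α) v τ ∈ Icc 0 K :=
    fun v hv τ hτ ↦ Icc_subset_Icc_right hv.2
      (dampedValue_mem_Icc hα0 hv.1 (mul_nonneg hc.le hτ.1))
  rw [hg' v₁ T hT.le hv₁T, hg' v₂ T hT.le hv₂T.le]
  refine intervalIntegral.integral_lt_integral_of_continuousOn_of_le_of_exists_lt hT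
    (hfd.comp (continuous_dampedValue hα0.le)).continuousOn
    (hfd.comp (continuous_dampedValue hα0.le)).continuousOn
    (fun τ hτ ↦ hmono.monotoneOn (hmem v₁ hv₁ τ (Ioc_subset_Icc_self hτ))
      (hmem v₂ hv₂ τ (Ioc_subset_Icc_self hτ)) (dampedValue_le_dampedValue hα0 hv₁.1 h12.le))
    ⟨0, left_mem_Icc.2 hT.le, ?_⟩
  simpa only [dampedValue_zero_right hα0.ne' hv₁.1, dampedValue_zero_right hα0.ne' hv₂.1]
    using hmono hv₁ hv₂ h12

/-- **Strict monotonicity of the traversed-distance function `g` (equation (5.16)).**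
Let `α ∈ (0,1]`, `δ > 0`, `K > 0`, and let `f' : ℝ → ℝ` be continuous with `f'(0) = 0` and
`f'` strictly increasing on `[0,K]`.  Define
`g(v) = ∫₀^∞ f'(((v^α − δατ)₊)^{1/α}) dτ`.
Then `g(0) = 0` and `g` is strictly increasing on `[0,K]`. -/
theorem traversed_distance_strictMono
    (α δ K : ℝ) (hα : α ∈ Set.Ioc (0:ℝ) 1) (hδ : 0 < δ) (hK : 0 < K)
    (fd : ℝ → ℝ) (hfd : Continuous fd) (hfd0 : fd 0 = 0)
    (hmono : StrictMonoOn fd (Set.Icc 0 K))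
    (g : ℝ → ℝ)
    (hg : ∀ v, g v = ∫ τ in Set.Ioi (0:ℝ),
        fd ((max (v ^ α - δ * α * τ) 0) ^ (1/α))) :
    g 0 = 0 ∧ StrictMonoOn g (Set.Icc 0 K) :=
  traversed_distance_strictMono_general α δ K hα hδ fd hfd hfd0 hmono g hg
end
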